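/- Let a₁, a₂ ∈ G⁺ and b₁, b₂ ∈ H⁺. (i) If c is a greatest common lower bound of a₁ and a₂ with respect to ≤_L in G⁺, and e is a greatest common lower bound of b₁^{a₁⁻¹} and b₂^{a₂⁻¹} with respect to ≤_L in H⁺, then (c, e^c) is a greatest common lower bound of (a₁,b₁) and (a₂,b₂) with respect to ≤_L in G⁺ ⋉ H⁺. (ii) If c' is a greatest common lower bound of a₁ and a₂ with respect to ≤_R in G⁺ and e' is a greatest common lower bound of b₁ and b₂ with respect to ≤_R in H⁺, then (c', e') is a greatest common lower bound of (a₁,b₁) and (a₂,b₂) with respect to ≤_R in G⁺ ⋉ H⁺. (iii) If c'' is a least common upper bound of a₁ and a₂ with respect to ≤_R in G⁺ and e'' is a least common upper bound of b₁ and b₂ with respect to ≤_R in H⁺, then (c'', e'') is a least common upper bound of (a₁,b₁) and (a₂,b₂) with respect to ≤_R in G⁺ ⋉ H⁺. -/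

import Mathlib

/-- `a` left-divides `b` in the monoid `M`. -/
def dvdL {M : Type*} [Monoid M] (a b : M) : Prop := ∃ c, a * c = b

/-- `a` right-divides `b` in the monoid `M`. -/
def dvdR {M : Type*} [Monoid M] (a b : M) : Prop := ∃ c, c * a = b

/-- `L(a)`, the set of left divisors of `a`. -/
def Lset {M : Type*} [Monoid M] (a : M) : Set M := {x | dvdL x a}

/-- `R(a)`, the set of right divisors of `a`. -/
def Rset {M : Type*} [Monoid M] (a : M) : Set M := {x | dvdR x a}

/-- `a` is an atom: `a ≠ 1` and `a = b * c` implies `b = 1` or `c = 1`. -/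
def IsAtomElt {M : Type*} [Monoid M] (a : M) : Prop :=
  a ≠ 1 ∧ ∀ b c : M, a = b * c → b = 1 ∨ c = 1

/-- `M` is atomic: every element is a finite product of atoms, and the lengths of
expressions of a given element as products of atoms are bounded above. -/
def Atomic (M : Type*) [Monoid M] : Prop :=
  (∀ a : M, ∃ l : List M, (∀ x ∈ l, IsAtomElt x) ∧ l.prod = a) ∧
  (∀ a : M, ∃ N : ℕ, ∀ l : List M, (∀ x ∈ l, IsAtomElt x) → l.prod = a → l.length ≤ N)

/-- `Δ` is a Garside element: `L(Δ) = R(Δ)` and `L(Δ)` generates `M`. -/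
def IsGarsideElt {M : Type*} [Monoid M] (Δ : M) : Prop :=
  Lset Δ = Rset Δ ∧ Submonoid.closure (Lset Δ) = ⊤

/-- `d` is a greatest common lower bound of `a` and `b` with respect to `≤_L`. -/
def IsGlbL {M : Type*} [Monoid M] (a b d : M) : Prop :=
  dvdL d a ∧ dvdL d b ∧ ∀ c : M, dvdL c a → dvdL c b → dvdL c d

/-- `d` is a least common upper bound of `a` and `b` with respect to `≤_L`. -/
def IsLubL {M : Type*} [Monoid M] (a b d : M) : Prop :=
  dvdL a d ∧ dvdL b d ∧ ∀ c : M, dvdL a c → dvdL b c → dvdL d c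

/-- `d` is a greatest common lower bound of `a` and `b` with respect to `≤_R`. -/
def IsGlbR {M : Type*} [Monoid M] (a b d : M) : Prop :=
  dvdR d a ∧ dvdR d b ∧ ∀ c : M, dvdR c a → dvdR c b → dvdR c d

/-- `d` is a least common upper bound of `a` and `b` with respect to `≤_R`. -/
def IsLubR {M : Type*} [Monoid M] (a b d : M) : Prop :=
  dvdR a d ∧ dvdR b d ∧ ∀ c : M, dvdR a c → dvdR b c → dvdR d c

/-- `M` is a Garside monoid: finitely generated, left and right cancellative, atomic,
`≤_L`- and `≤_R`-lattice conditions, and it possesses a Garside element. -/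
def IsGarsideMonoid (M : Type*) [Monoid M] : Prop :=
  (∃ S : Set M, S.Finite ∧ Submonoid.closure S = ⊤) ∧
  (∀ a b c : M, a * b = a * c → b = c) ∧
  (∀ a b c : M, b * a = c * a → b = c) ∧
  Atomic M ∧
  (∀ a b : M, ∃ d, IsGlbL a b d) ∧
  (∀ a b : M, ∃ d, IsLubL a b d) ∧
  (∀ a b : M, ∃ d, IsGlbR a b d) ∧
  (∀ a b : M, ∃ d, IsLubR a b d) ∧
  (∃ Δ : M, IsGarsideElt Δ)

/-- Group-level left divisibility: `a ≤_L b` iff `a⁻¹ * b` is positive. -/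
def gdvdL {G : Type*} [Group G] (P : Submonoid G) (a b : G) : Prop := a⁻¹ * b ∈ P

/-- Group-level right divisibility: `a ≤_R b` iff `b * a⁻¹` is positive. -/
def gdvdR {G : Type*} [Group G] (P : Submonoid G) (a b : G) : Prop := b * a⁻¹ ∈ P

/-- `G` is a Garside group with positive monoid `P` and chosen Garside element `Δ`:
`P` is a Garside monoid, every element of `G` is a fraction `a * b⁻¹` of positive
elements, and `Δ` is a Garside element of `P`. -/
def IsGarsideGroup {G : Type*} [Group G] (P : Submonoid G) (Δ : G) : Prop :=
  IsGarsideMonoid P ∧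
  (∀ g : G, ∃ a b : P, g = (a : G) * (b : G)⁻¹) ∧
  ∃ hΔ : Δ ∈ P, IsGarsideElt (⟨Δ, hΔ⟩ : P)

/-- A right action of the group `G` on the group `H` by group automorphisms,
written `h ↦ ρ.act x h` (the paper's `h^x`). -/
structure RightAction (G H : Type*) [Group G] [Group H] where
  act : G → H → H
  act_mul : ∀ (x : G) (h₁ h₂ : H), act x (h₁ * h₂) = act x h₁ * act x h₂
  act_one : ∀ h : H, act 1 h = h
  act_comp : ∀ (x y : G) (h : H), act (x * y) h = act y (act x h)

namespace RightAction

variable {G H : Type*} [Group G] [Group H]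

lemma act_one' (ρ : RightAction G H) (x : G) : ρ.act x 1 = 1 := by
  have h := ρ.act_mul x 1 1
  rw [one_mul] at h
  exact mul_left_cancel (h.symm.trans (mul_one _).symm)

end RightAction

/-- The semidirect product `G ⋉ H` with multiplication
`(x₁,h₁)·(x₂,h₂) = (x₁·x₂, h₁^{x₂}·h₂)`. -/
structure SDP {G H : Type*} [Group G] [Group H] (ρ : RightAction G H) where
  g : G
  h : H

namespace SDP

variable {G H : Type*} [Group G] [Group H] {ρ : RightAction G H}

protected def gmul (p q : SDP ρ) : SDP ρ := ⟨p.g * q.g, ρ.act q.g p.h * q.h⟩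

protected def gone : SDP ρ := ⟨1, 1⟩

protected def ginv (p : SDP ρ) : SDP ρ := ⟨p.g⁻¹, ρ.act p.g⁻¹ p.h⁻¹⟩

protected lemma gmul_assoc (p q r : SDP ρ) :
    SDP.gmul (SDP.gmul p q) r = SDP.gmul p (SDP.gmul q r) := by
  simp only [SDP.gmul, mk.injEq]
  exact ⟨mul_assoc _ _ _, by rw [ρ.act_mul, ρ.act_comp, mul_assoc]⟩

protected lemma gone_mul (p : SDP ρ) : SDP.gmul SDP.gone p = p := by
  simp only [SDP.gmul, SDP.gone]
  simp [RightAction.act_one']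

protected lemma gmul_one (p : SDP ρ) : SDP.gmul p SDP.gone = p := by
  simp only [SDP.gmul, SDP.gone]
  simp [ρ.act_one]

protected lemma ginv_mul_cancel (p : SDP ρ) : SDP.gmul (SDP.ginv p) p = SDP.gone := by
  simp only [SDP.gmul, SDP.ginv, SDP.gone, mk.injEq]
  rw [← ρ.act_comp]
  simp [ρ.act_one]

/-- The group structure on the semidirect product `G ⋉ H`. -/
instance : Group (SDP ρ) where
  mul := SDP.gmul
  one := SDP.gone
  inv := SDP.ginv
  mul_assoc := SDP.gmul_assoc
  one_mul := SDP.gone_mul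
  mul_one := SDP.gmul_one
  inv_mul_cancel := SDP.ginv_mul_cancel

@[simp] lemma mul_g (p q : SDP ρ) : (p * q).g = p.g * q.g := rfl
@[simp] lemma mul_h (p q : SDP ρ) : (p * q).h = ρ.act q.g p.h * q.h := rfl
@[simp] lemma one_g : (1 : SDP ρ).g = 1 := rfl
@[simp] lemma one_h : (1 : SDP ρ).h = 1 := rfl

end SDP

/-- Membership in the submonoid `G⁺ ⋉ H⁺` of `G ⋉ H`. -/
def SDPpos {G H : Type*} [Group G] [Group H] {ρ : RightAction G H}
    (PG : Submonoid G) (PH : Submonoid H) (p : SDP ρ) : Prop :=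
  p.g ∈ PG ∧ p.h ∈ PH

/-- `p ≤_L q` in `G ⋉ H`: `p · u = q` for some `u ∈ G⁺ ⋉ H⁺`. -/
def SDPdvdL {G H : Type*} [Group G] [Group H] {ρ : RightAction G H}
    (PG : Submonoid G) (PH : Submonoid H) (p q : SDP ρ) : Prop :=
  ∃ u : SDP ρ, SDPpos PG PH u ∧ p * u = q

/-- `p ≤_R q` in `G ⋉ H`: `u · p = q` for some `u ∈ G⁺ ⋉ H⁺`. -/
def SDPdvdR {G H : Type*} [Group G] [Group H] {ρ : RightAction G H}
    (PG : Submonoid G) (PH : Submonoid H) (p q : SDP ρ) : Prop :=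
  ∃ u : SDP ρ, SDPpos PG PH u ∧ u * p = q

/-- `d` is a greatest common lower bound of `a` and `b` with respect to `≤_L`
within the positive monoid `P`. -/
def IsPosGlbL {G : Type*} [Group G] (P : Submonoid G) (a b d : G) : Prop :=
  d ∈ P ∧ gdvdL P d a ∧ gdvdL P d b ∧
    ∀ c : G, c ∈ P → gdvdL P c a → gdvdL P c b → gdvdL P c d

/-- `d` is a greatest common lower bound of `a` and `b` with respect to `≤_R`
within the positive monoid `P`. -/
def IsPosGlbR {G : Type*} [Group G] (P : Submonoid G) (a b d : G) : Prop :=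
  d ∈ P ∧ gdvdR P d a ∧ gdvdR P d b ∧
    ∀ c : G, c ∈ P → gdvdR P c a → gdvdR P c b → gdvdR P c d

/-- `d` is a least common upper bound of `a` and `b` with respect to `≤_R`
within the positive monoid `P`. -/
def IsPosLubR {G : Type*} [Group G] (P : Submonoid G) (a b d : G) : Prop :=
  d ∈ P ∧ gdvdR P a d ∧ gdvdR P b d ∧
    ∀ c : G, c ∈ P → gdvdR P a c → gdvdR P b c → gdvdR P d c

/-- `d` is a greatest common lower bound of `p` and `q` with respect to `≤_L`
in `G⁺ ⋉ H⁺`. -/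
def SDPIsGlbL {G H : Type*} [Group G] [Group H] {ρ : RightAction G H}
    (PG : Submonoid G) (PH : Submonoid H) (p q d : SDP ρ) : Prop :=
  SDPpos PG PH d ∧ SDPdvdL PG PH d p ∧ SDPdvdL PG PH d q ∧
    ∀ c : SDP ρ, SDPpos PG PH c → SDPdvdL PG PH c p → SDPdvdL PG PH c q → SDPdvdL PG PH c d

/-- `d` is a greatest common lower bound of `p` and `q` with respect to `≤_R`
in `G⁺ ⋉ H⁺`. -/
def SDPIsGlbR {G H : Type*} [Group G] [Group H] {ρ : RightAction G H}
    (PG : Submonoid G) (PH : Submonoid H) (p q d : SDP ρ) : Prop :=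
  SDPpos PG PH d ∧ SDPdvdR PG PH d p ∧ SDPdvdR PG PH d q ∧
    ∀ c : SDP ρ, SDPpos PG PH c → SDPdvdR PG PH c p → SDPdvdR PG PH c q → SDPdvdR PG PH c d

/-- `d` is a least common upper bound of `p` and `q` with respect to `≤_R`
in `G⁺ ⋉ H⁺`. -/
def SDPIsLubR {G H : Type*} [Group G] [Group H] {ρ : RightAction G H}
    (PG : Submonoid G) (PH : Submonoid H) (p q d : SDP ρ) : Prop :=
  SDPpos PG PH d ∧ SDPdvdR PG PH p d ∧ SDPdvdR PG PH q d ∧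
    ∀ c : SDP ρ, SDPpos PG PH c → SDPdvdR PG PH p c → SDPdvdR PG PH q c → SDPdvdR PG PH d c

/-!
In the coordinates `(x, h) ↦ (x, h^{x⁻¹})` the order `≤_L` on `G ⋉ H` becomes the product
of the orders `≤_L` on `G` and on `H`: `(x, h) ≤_L (y, k)` iff `x ≤_L y` and
`h^{x⁻¹} ≤_L k^{y⁻¹}`, since `(x, h)⁻¹ (y, k)` is positive exactly when its image under the
positivity-preserving automorphism `(·)^{y⁻¹}` is. The order `≤_R` is already componentwise:
`(x, h) ≤_R (y, k)` iff `x ≤_R y` and `h ≤_R k`. Greatest lower and least upper bounds in a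
product order are computed componentwise.
-/

namespace RightAction

variable {G H : Type*} [Group G] [Group H] (ρ : RightAction G H)

lemma act_inv (x : G) (h : H) : ρ.act x h⁻¹ = (ρ.act x h)⁻¹ :=
  eq_inv_of_mul_eq_one_left (by rw [← ρ.act_mul, inv_mul_cancel, ρ.act_one'])

lemma act_inv_act (x : G) (h : H) : ρ.act x⁻¹ (ρ.act x h) = h := by
  rw [← ρ.act_comp, mul_inv_cancel, ρ.act_one]

lemma act_mem_iff {P : Submonoid H} (hP : ∀ x : G, ρ.act x '' (P : Set H) = (P : Set H))
    (x : G) {h : H} : ρ.act x h ∈ P ↔ h ∈ P := by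
  refine ⟨fun hx => ?_, fun hh => (hP x).subset ⟨h, hh, rfl⟩⟩
  simpa only [act_inv_act, SetLike.mem_coe] using (hP x⁻¹).subset ⟨_, hx, rfl⟩

end RightAction

namespace SDP

variable {G H : Type*} [Group G] [Group H] {ρ : RightAction G H}

@[simp] lemma inv_g (p : SDP ρ) : p⁻¹.g = p.g⁻¹ := rfl
@[simp] lemma inv_h (p : SDP ρ) : p⁻¹.h = ρ.act p.g⁻¹ p.h⁻¹ := rfl

end SDP

section Divisibility

variable {G H : Type*} [Group G] [Group H] {ρ : RightAction G H}
  {PG : Submonoid G} {PH : Submonoid H}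

lemma SDPdvdL_iff_SDPpos_inv_mul (p q : SDP ρ) :
    SDPdvdL PG PH p q ↔ SDPpos PG PH (p⁻¹ * q) :=
  ⟨fun ⟨_, hu, hpu⟩ => by rwa [← hpu, inv_mul_cancel_left],
    fun h => ⟨_, h, mul_inv_cancel_left p q⟩⟩

lemma SDPdvdR_iff_SDPpos_mul_inv (p q : SDP ρ) :
    SDPdvdR PG PH p q ↔ SDPpos PG PH (q * p⁻¹) :=
  ⟨fun ⟨_, hu, hup⟩ => by rwa [← hup, mul_inv_cancel_right],
    fun h => ⟨_, h, inv_mul_cancel_right q p⟩⟩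

lemma SDPdvdL_iff (hact : ∀ x : G, ρ.act x '' (PH : Set H) = (PH : Set H)) (p q : SDP ρ) :
    SDPdvdL PG PH p q ↔
      gdvdL PG p.g q.g ∧ gdvdL PH (ρ.act p.g⁻¹ p.h) (ρ.act q.g⁻¹ q.h) := by
  rw [SDPdvdL_iff_SDPpos_inv_mul, SDPpos, ← ρ.act_mem_iff hact q.g⁻¹]
  simp [gdvdL, ρ.act_mul, ρ.act_inv, ← ρ.act_comp]

lemma SDPdvdR_iff (hact : ∀ x : G, ρ.act x '' (PH : Set H) = (PH : Set H)) (p q : SDP ρ) :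
    SDPdvdR PG PH p q ↔ gdvdR PG p.g q.g ∧ gdvdR PH p.h q.h := by
  rw [SDPdvdR_iff_SDPpos_mul_inv, SDPpos, ← ρ.act_mem_iff hact p.g]
  simp [gdvdR, ρ.act_mul, ρ.act_inv, ρ.act_one, ← ρ.act_comp]

end Divisibility

section Bounds

variable {G H : Type*} [Group G] [Group H] {ρ : RightAction G H}
  {PG : Submonoid G} {PH : Submonoid H}

lemma SDPIsGlbL_mk (hact : ∀ x : G, ρ.act x '' (PH : Set H) = (PH : Set H))
    {a₁ a₂ c : G} {b₁ b₂ e : H} (hc : IsPosGlbL PG a₁ a₂ c)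
    (he : IsPosGlbL PH (ρ.act a₁⁻¹ b₁) (ρ.act a₂⁻¹ b₂) e) :
    SDPIsGlbL PG PH (SDP.mk a₁ b₁ : SDP ρ) ⟨a₂, b₂⟩ ⟨c, ρ.act c e⟩ := by
  obtain ⟨hcP, hc₁, hc₂, hc_max⟩ := hc
  obtain ⟨heP, he₁, he₂, he_max⟩ := he
  simp only [SDPIsGlbL, SDPpos, SDPdvdL_iff hact, ρ.act_inv_act]
  exact ⟨⟨hcP, (ρ.act_mem_iff hact c).2 heP⟩, ⟨hc₁, he₁⟩, ⟨hc₂, he₂⟩,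
    fun _ ⟨hf, hk⟩ ⟨hf₁, hk₁⟩ ⟨hf₂, hk₂⟩ =>
      ⟨hc_max _ hf hf₁ hf₂, he_max _ ((ρ.act_mem_iff hact _).2 hk) hk₁ hk₂⟩⟩

lemma SDPIsGlbR_mk (hact : ∀ x : G, ρ.act x '' (PH : Set H) = (PH : Set H))
    {a₁ a₂ c : G} {b₁ b₂ e : H} (hc : IsPosGlbR PG a₁ a₂ c) (he : IsPosGlbR PH b₁ b₂ e) :
    SDPIsGlbR PG PH (SDP.mk a₁ b₁ : SDP ρ) ⟨a₂, b₂⟩ ⟨c, e⟩ := by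
  obtain ⟨hcP, hc₁, hc₂, hc_max⟩ := hc
  obtain ⟨heP, he₁, he₂, he_max⟩ := he
  simp only [SDPIsGlbR, SDPpos, SDPdvdR_iff hact]
  exact ⟨⟨hcP, heP⟩, ⟨hc₁, he₁⟩, ⟨hc₂, he₂⟩, fun _ ⟨hf, hk⟩ ⟨hf₁, hk₁⟩ ⟨hf₂, hk₂⟩ =>
    ⟨hc_max _ hf hf₁ hf₂, he_max _ hk hk₁ hk₂⟩⟩

lemma SDPIsLubR_mk (hact : ∀ x : G, ρ.act x '' (PH : Set H) = (PH : Set H))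
    {a₁ a₂ c : G} {b₁ b₂ e : H} (hc : IsPosLubR PG a₁ a₂ c) (he : IsPosLubR PH b₁ b₂ e) :
    SDPIsLubR PG PH (SDP.mk a₁ b₁ : SDP ρ) ⟨a₂, b₂⟩ ⟨c, e⟩ := by
  obtain ⟨hcP, hc₁, hc₂, hc_min⟩ := hc
  obtain ⟨heP, he₁, he₂, he_min⟩ := he
  simp only [SDPIsLubR, SDPpos, SDPdvdR_iff hact]
  exact ⟨⟨hcP, heP⟩, ⟨hc₁, he₁⟩, ⟨hc₂, he₂⟩, fun _ ⟨hf, hk⟩ ⟨hf₁, hk₁⟩ ⟨hf₂, hk₂⟩ =>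
    ⟨hc_min _ hf hf₁ hf₂, he_min _ hk hk₁ hk₂⟩⟩

end Bounds

theorem sdp_glb_lub_general {G H : Type*} [Group G] [Group H] (ρ : RightAction G H)
    (PG : Submonoid G) (PH : Submonoid H)
    (hact : ∀ x : G, ρ.act x '' (PH : Set H) = (PH : Set H))
    (a₁ a₂ : G) (b₁ b₂ : H) :
    (∀ c : G, ∀ e : H, IsPosGlbL PG a₁ a₂ c →
      IsPosGlbL PH (ρ.act a₁⁻¹ b₁) (ρ.act a₂⁻¹ b₂) e →
      SDPIsGlbL PG PH (SDP.mk a₁ b₁ : SDP ρ) (SDP.mk a₂ b₂) (SDP.mk c (ρ.act c e))) ∧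
    (∀ c' : G, ∀ e' : H, IsPosGlbR PG a₁ a₂ c' → IsPosGlbR PH b₁ b₂ e' →
      SDPIsGlbR PG PH (SDP.mk a₁ b₁ : SDP ρ) (SDP.mk a₂ b₂) (SDP.mk c' e')) ∧
    (∀ c'' : G, ∀ e'' : H, IsPosLubR PG a₁ a₂ c'' → IsPosLubR PH b₁ b₂ e'' →
      SDPIsLubR PG PH (SDP.mk a₁ b₁ : SDP ρ) (SDP.mk a₂ b₂) (SDP.mk c'' e'')) :=
  ⟨fun _ _ => SDPIsGlbL_mk hact, fun _ _ => SDPIsGlbR_mk hact, fun _ _ => SDPIsLubR_mk hact⟩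

/-- **Proposition 4.2 (5),(7),(8).** Gcds and lcms in `G⁺ ⋉ H⁺`:
(i) if `c` is a `≤_L`-gcd of `a₁, a₂` in `G⁺` and `e` is a `≤_L`-gcd of
`b₁^{a₁⁻¹}, b₂^{a₂⁻¹}` in `H⁺`, then `(c, e^c)` is a `≤_L`-gcd of `(a₁,b₁)` and
`(a₂,b₂)`; (ii) if `c'` is a `≤_R`-gcd of `a₁, a₂` and `e'` is a `≤_R`-gcd of
`b₁, b₂`, then `(c', e')` is a `≤_R`-gcd of `(a₁,b₁)` and `(a₂,b₂)`; (iii) the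
analogous statement for `≤_R`-lcms. -/
theorem sdp_glb_lub {G H : Type*} [Group G] [Group H] (ρ : RightAction G H)
    (PG : Submonoid G) (PH : Submonoid H) (ΔG : G) (ΔH : H)
    (hG : IsGarsideGroup PG ΔG) (hH : IsGarsideGroup PH ΔH)
    (hact : ∀ x : G, ρ.act x '' (PH : Set H) = (PH : Set H))
    (a₁ a₂ : G) (b₁ b₂ : H)
    (ha₁ : a₁ ∈ PG) (ha₂ : a₂ ∈ PG) (hb₁ : b₁ ∈ PH) (hb₂ : b₂ ∈ PH) :
    (∀ c : G, ∀ e : H, IsPosGlbL PG a₁ a₂ c →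
      IsPosGlbL PH (ρ.act a₁⁻¹ b₁) (ρ.act a₂⁻¹ b₂) e →
      SDPIsGlbL PG PH (SDP.mk a₁ b₁ : SDP ρ) (SDP.mk a₂ b₂) (SDP.mk c (ρ.act c e))) ∧
    (∀ c' : G, ∀ e' : H, IsPosGlbR PG a₁ a₂ c' → IsPosGlbR PH b₁ b₂ e' →
      SDPIsGlbR PG PH (SDP.mk a₁ b₁ : SDP ρ) (SDP.mk a₂ b₂) (SDP.mk c' e')) ∧
    (∀ c'' : G, ∀ e'' : H, IsPosLubR PG a₁ a₂ c'' → IsPosLubR PH b₁ b₂ e'' →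
      SDPIsLubR PG PH (SDP.mk a₁ b₁ : SDP ρ) (SDP.mk a₂ b₂) (SDP.mk c'' e'')) :=
  sdp_glb_lub_general ρ PG PH hact a₁ a₂ b₁ b₂
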